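/- Let 1 ≤ k < n be integers. For every h ∈ ℝ^n, every γ > 0 and every ν₁ ≥ 0, ν₂ ≥ 0, max_{w ∈ S_str(n,k)} (−hᵀw) ≤ γ + ν₂·(2k − n) + Σ_{i=1}^{n} t_i, where t_i = max( (|h_i| + ν₁)²/(4γ) − ν₂ , (max(|h_i| − ν₁, 0))²/(4γ) + ν₂ ). -/
import Mathlib


/-- `Sstr n k`: unit-norm vectors `w` in `ℝ^n` for which there is a sign pattern
`b ∈ {−1,1}^n` with `∑ b i = n − 2k` and `∑ b i * |w i| ≤ 0`. -/
def Sstr (n k : ℕ) : Set (Fin n → ℝ) :=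
  {w | ∑ i, (w i) ^ 2 = 1 ∧
    ∃ b : Fin n → ℝ, (∀ i, b i = 1 ∨ b i = -1) ∧
      (∑ i, b i) = (n : ℝ) - 2 * k ∧ ∑ i, b i * |w i| ≤ 0}

lemma amgm_aux (γ a x : ℝ) (hγ : 0 < γ) : a * x ≤ γ * x ^ 2 + a ^ 2 / (4 * γ) := by
  have h4 : (0:ℝ) < 4 * γ := by linarith
  have key : (a * x - γ * x ^ 2) * (4 * γ) ≤ a ^ 2 := by
    nlinarith [sq_nonneg (a - 2 * γ * x)]
  have := (le_div_iff₀ h4).mpr key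
  linarith

theorem str_dual_upper_bound (n k : ℕ) (hk : 1 ≤ k) (hkn : k < n)
    (h : Fin n → ℝ) (γ ν₁ ν₂ : ℝ) (hγ : 0 < γ) (hν₁ : 0 ≤ ν₁) (hν₂ : 0 ≤ ν₂) :
    (⨆ w : Sstr n k, -(∑ i, h i * w.1 i)) ≤
      γ + ν₂ * (2 * (k : ℝ) - n) +
        ∑ i, max ((|h i| + ν₁) ^ 2 / (4 * γ) - ν₂)
            ((max (|h i| - ν₁) 0) ^ 2 / (4 * γ) + ν₂) := by
  set t : Fin n → ℝ := fun i =>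
    max ((|h i| + ν₁) ^ 2 / (4 * γ) - ν₂)
        ((max (|h i| - ν₁) 0) ^ 2 / (4 * γ) + ν₂) with ht
  have htν : ∀ i, ν₂ ≤ t i := fun i => by
    refine le_trans ?_ (le_max_right _ _)
    have : 0 ≤ (max (|h i| - ν₁) 0) ^ 2 / (4 * γ) :=
      div_nonneg (sq_nonneg _) (by linarith)
    linarith
  have hRHS : 0 ≤ γ + ν₂ * (2 * (k : ℝ) - n) + ∑ i, t i := by
    have hsum : (n : ℝ) * ν₂ ≤ ∑ i, t i := by
      calc (n : ℝ) * ν₂ = ∑ _i : Fin n, ν₂ := by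
            simp [Finset.sum_const, mul_comm]
        _ ≤ ∑ i, t i := Finset.sum_le_sum fun i _ => htν i
    have hkν : 0 ≤ 2 * (k : ℝ) * ν₂ := by positivity
    nlinarith
  apply Real.iSup_le _ hRHS
  rintro ⟨w, hw1, b, hb1, hb2, hb3⟩
  simp only
  -- pointwise bound
  have hC : ∀ i, (|h i| - ν₁ * b i) * |w i| + ν₂ * b i ≤ γ * (w i) ^ 2 + t i := by
    intro i
    rcases hb1 i with hbi | hbi
    · -- b i = 1
      rw [hbi]
      have h1 : (|h i| - ν₁) * |w i| ≤ max (|h i| - ν₁) 0 * |w i| :=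
        mul_le_mul_of_nonneg_right (le_max_left _ _) (abs_nonneg _)
      have h2 : max (|h i| - ν₁) 0 * |w i| ≤ γ * |w i| ^ 2 +
          (max (|h i| - ν₁) 0) ^ 2 / (4 * γ) := amgm_aux γ _ _ hγ
      have h3 : (max (|h i| - ν₁) 0) ^ 2 / (4 * γ) + ν₂ ≤ t i := le_max_right _ _
      rw [sq_abs] at h2
      nlinarith
    · -- b i = -1
      rw [hbi]
      have h2 : (|h i| + ν₁) * |w i| ≤ γ * |w i| ^ 2 +
          (|h i| + ν₁) ^ 2 / (4 * γ) := amgm_aux γ _ _ hγ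
      have h3 : (|h i| + ν₁) ^ 2 / (4 * γ) - ν₂ ≤ t i := le_max_left _ _
      rw [sq_abs] at h2
      nlinarith
  have hA : -∑ i, h i * w i ≤ ∑ i, |h i| * |w i| := by
    rw [← Finset.sum_neg_distrib]
    refine Finset.sum_le_sum fun i _ => ?_
    calc -(h i * w i) ≤ |h i * w i| := neg_le_abs _
      _ = |h i| * |w i| := abs_mul _ _
  have hB : ∑ i, |h i| * |w i| ≤ ∑ i, (|h i| - ν₁ * b i) * |w i| := by
    have hne : ν₁ * ∑ i, b i * |w i| ≤ 0 := mul_nonpos_iff.mpr (Or.inl ⟨hν₁, hb3⟩)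
    have expand : ∑ i, (|h i| - ν₁ * b i) * |w i| =
        ∑ i, |h i| * |w i| - ν₁ * ∑ i, b i * |w i| := by
      rw [Finset.mul_sum, ← Finset.sum_sub_distrib]
      exact Finset.sum_congr rfl fun i _ => by ring
    linarith
  have hD : ∑ i, ((|h i| - ν₁ * b i) * |w i| + ν₂ * b i) ≤ γ + ∑ i, t i := by
    calc ∑ i, ((|h i| - ν₁ * b i) * |w i| + ν₂ * b i)
        ≤ ∑ i, (γ * (w i) ^ 2 + t i) := Finset.sum_le_sum fun i _ => hC i
      _ = γ * ∑ i, (w i) ^ 2 + ∑ i, t i := by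
          rw [Finset.sum_add_distrib, Finset.mul_sum]
      _ = γ + ∑ i, t i := by rw [hw1, mul_one]
  have hE : ∑ i, ((|h i| - ν₁ * b i) * |w i| + ν₂ * b i) =
      ∑ i, (|h i| - ν₁ * b i) * |w i| + ν₂ * ((n : ℝ) - 2 * k) := by
    rw [Finset.sum_add_distrib, ← Finset.mul_sum, hb2]
  linarith
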